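/- Let Σ be a finite alphabet and let L ⊆ Σ^ω be ω-regular (recognised by some deterministic parity automaton). Then for every x ≥ 1, the congruence ≈ has finite index on (Σ*)^x, i.e. there are only finitely many ≈-equivalence classes of x-tuples of finite words. -/

import Mathlib

open scoped Classical

noncomputable section

/-! ### Infinite words and the parity condition -/

/-- The minimal value occurring infinitely often in a sequence of priorities;
for (eventually) bounded sequences this is the `liminf`. -/
def minInfOften (pi : ℕ → ℕ) : ℕ := sInf {x : ℕ | ∀ N : ℕ, ∃ n : ℕ, N ≤ n ∧ pi n = x}

/-- The (min-)parity acceptance condition: the liminf of the priorities is even. -/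
def ParityAccept (pi : ℕ → ℕ) : Prop := Even (minInfOften pi)

/-- Prepend a finite word to an infinite word. -/
def prependW {α : Type} (u : List α) (w : ℕ → α) : ℕ → α := fun i =>
  if h : i < u.length then u.get ⟨i, h⟩ else w (i - u.length)

/-- The prefix of length `n` of an infinite word, as a list. -/
def wordPrefix {α : Type} (w : ℕ → α) (n : ℕ) : List α := List.ofFn (fun i : Fin n => w i)

/-- Drop the first `n` letters of an infinite word. -/
def wordDrop {α : Type} (w : ℕ → α) (n : ℕ) : ℕ → α := fun i => w (n + i)

/-- The periodic infinite word `v^ω` (junk if `v = []`). -/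
def perWord {α : Type} [Inhabited α] (v : List α) : ℕ → α := fun i => v.getD (i % v.length) default

/-! ### Layered automata -/

/-- A layered automaton over the alphabet `α` with `d` layers.  The (disjoint) layers
are encoded by the function `layer : Q → [1,d]`; each layer is a deterministic
transition system (partial transition function `δ`, which stays inside the layer);
`μ` sends each state of layer `x+1` to its parent in layer `x` (and is the identity
on layer `1`) and is a morphism of transition systems; layer `1` is complete, carries
the initial state, and all its states are reachable from the initial state. -/
structure Layered (Q α : Type) (d : ℕ) where
  layer : Q → ℕ
  layer_pos : ∀ q, 1 ≤ layer q
  layer_le : ∀ q, layer q ≤ d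
  δ : Q → α → Option Q
  δ_layer : ∀ q a q', δ q a = some q' → layer q' = layer q
  μ : Q → Q
  μ_layer : ∀ q, 1 < layer q → layer (μ q) + 1 = layer q
  μ_id : ∀ q, layer q = 1 → μ q = q
  μ_morph : ∀ q a q', 1 < layer q → δ q a = some q' → δ (μ q) a = some (μ q')
  init : Q
  init_layer : layer init = 1
  complete1 : ∀ q a, layer q = 1 → (δ q a).isSome = true
  reach1 : ∀ q, layer q = 1 →
    Relation.ReflTransGen (fun p p' => layer p = 1 ∧ ∃ a, δ p a = some p') init q

namespace Layered

variable {Q R α : Type} {d d' : ℕ}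

/-- The run of the (deterministic) layer transition systems on a finite word. -/
def runList (A : Layered Q α d) : Q → List α → Option Q
  | q, [] => some q
  | q, a :: u =>
    match A.δ q a with
    | some q' => runList A q' u
    | none => none

/-- `μ̂_x q`: the ancestor of `q` in layer `x` (image under the composed morphisms). -/
def muHat (A : Layered Q α d) (x : ℕ) (q : Q) : Q := (A.μ)^[A.layer q - x] q

/-- A leaf state: a state that is not in the image of any of the morphisms `μ_x`. -/
def IsLeaf (A : Layered Q α d) (q : Q) : Prop := ∀ p, 1 < A.layer p → A.μ p ≠ q

/-- `layer(q,a)`: the largest layer `x ≤ layer q` in which `δ_x (μ̂_x q) a` is defined. -/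
def layerOf (A : Layered Q α d) (q : Q) (a : α) : ℕ :=
  Nat.findGreatest (fun x => (A.δ (A.muHat x q) a).isSome = true) (A.layer q)

/-- A state `p` is an ancestor of `q`. -/
def IsAncestor (A : Layered Q α d) (p q : Q) : Prop :=
  A.layer p ≤ A.layer q ∧ A.muHat (A.layer p) q = p

/-! #### Safe languages and strong acceptance -/

/-- Membership of a finite word in the `x`-safe language of `q`. -/
def SafeFin (A : Layered Q α d) (x : ℕ) (q : Q) (u : List α) : Prop :=
  (A.runList (A.muHat x q) u).isSome = true

/-- Membership of an infinite word in the `x`-safe language of `q`. -/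
def SafeInf (A : Layered Q α d) (x : ℕ) (q : Q) (w : ℕ → α) : Prop :=
  ∀ n : ℕ, A.SafeFin x q (wordPrefix w n)

/-- `w` is strongly accepted by the state `p` (which lies in the even layer `x = layer p`):
`w` is `x`-safe from `p` and no decomposition `w = u·w'` admits a state `p'` of layer `x+1`
with a `u`-run from `p` to the parent of `p'` in `T_x` such that `w'` is `(x+1)`-safe from `p'`. -/
def StronglyAcc (A : Layered Q α d) (p : Q) (w : ℕ → α) : Prop :=
  Even (A.layer p) ∧ A.SafeInf (A.layer p) p w ∧
  ∀ (n : ℕ) (p' : Q), A.layer p' = A.layer p + 1 →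
    A.runList p (wordPrefix w n) = some (A.μ p') →
    ¬ A.SafeInf (A.layer p') p' (wordDrop w n)

/-- `w` is strongly rejected by `p` (lying in an odd layer). -/
def StronglyRej (A : Layered Q α d) (p : Q) (w : ℕ → α) : Prop :=
  Odd (A.layer p) ∧ A.SafeInf (A.layer p) p w ∧
  ∀ (n : ℕ) (p' : Q), A.layer p' = A.layer p + 1 →
    A.runList p (wordPrefix w n) = some (A.μ p') →
    ¬ A.SafeInf (A.layer p') p' (wordDrop w n)

/-- Consistency: no two states with the same layer-1 ancestor strongly accept
resp. strongly reject a common infinite word. -/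
def Consistent (A : Layered Q α d) : Prop :=
  ¬ ∃ (p p' : Q) (w : ℕ → α), A.muHat 1 p = A.muHat 1 p' ∧
      A.StronglyAcc p w ∧ A.StronglyRej p' w

/-- `w` is ultimately safe in layer `x`, for the automaton started in the
layer-1 state `q0`. -/
def UltSafeFrom (A : Layered Q α d) (q0 : Q) (x : ℕ) (w : ℕ → α) : Prop :=
  ∃ (n : ℕ) (p : Q), A.layer p = x ∧
    A.runList q0 (wordPrefix w n) = some (A.muHat 1 p) ∧
    A.SafeInf x p (wordDrop w n)

/-- Layered acceptance from `q0`: the maximal layer in which `w` is ultimately safe is even. -/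
def LayeredAcceptFrom (A : Layered Q α d) (q0 : Q) (w : ℕ → α) : Prop :=
  ∃ x : ℕ, Even x ∧ A.UltSafeFrom q0 x w ∧ ∀ y : ℕ, A.UltSafeFrom q0 y w → y ≤ x

/-- Layered rejection from `q0`: the maximal layer in which `w` is ultimately safe is odd. -/
def LayeredRejectFrom (A : Layered Q α d) (q0 : Q) (w : ℕ → α) : Prop :=
  ∃ x : ℕ, Odd x ∧ A.UltSafeFrom q0 x w ∧ ∀ y : ℕ, A.UltSafeFrom q0 y w → y ≤ x

/-! #### The semantics automaton `⟦A⟧` (a simple-by-priorities alternating parity automaton) -/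

/-- The priority of the letter `a` in the state `q` of `⟦A⟧`. -/
def semPrio (A : Layered Q α d) (q : Q) (a : α) : ℕ := A.layerOf q a

/-- The transitions of `⟦A⟧` (between leaf states): `q —a→ q'` iff, for
`x = layer(q,a)`, we have `δ_x (μ̂_x q) a = μ̂_x q'`; the transition carries priority `x`. -/
def semStep (A : Layered Q α d) (q : Q) (a : α) (q' : Q) : Prop :=
  A.IsLeaf q' ∧ A.δ (A.muHat (A.layerOf q a) q) a = some (A.muHat (A.layerOf q a) q')

/-- Runs of `⟦A⟧` over the infinite word `w`, starting in `p`. -/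
def IsSemRun (A : Layered Q α d) (w : ℕ → α) (p : Q) (ρ : ℕ → Q) : Prop :=
  ρ 0 = p ∧ ∀ i : ℕ, A.semStep (ρ i) (w i) (ρ (i + 1))

/-- The sequence of priorities produced by a run of `⟦A⟧` over `w`. -/
def runPrios (A : Layered Q α d) (w : ℕ → α) (ρ : ℕ → Q) : ℕ → ℕ :=
  fun i => A.semPrio (ρ i) (w i)

/-- A resolver for Eve in `⟦A⟧`: given the history (the finite run so far, as a list of
(state, letter) pairs), the current state and a letter of odd priority, it picks a successor. -/
def EveResolver (A : Layered Q α d) (σ : List (Q × α) → Q → α → Q) : Prop :=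
  ∀ (h : List (Q × α)) (q : Q) (a : α), Odd (A.semPrio q a) → A.semStep q a (σ h q a)

/-- A resolver for Adam in `⟦A⟧` (resolving the even-priority steps). -/
def AdamResolver (A : Layered Q α d) (τ : List (Q × α) → Q → α → Q) : Prop :=
  ∀ (h : List (Q × α)) (q : Q) (a : α), Even (A.semPrio q a) → A.semStep q a (τ h q a)

/-- A run is consistent with the Eve-resolver `σ`: every odd-priority step follows `σ`. -/
def ConsEve (A : Layered Q α d) (σ : List (Q × α) → Q → α → Q) (w : ℕ → α) (ρ : ℕ → Q) : Prop :=
  ∀ i : ℕ, Odd (A.semPrio (ρ i) (w i)) →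
    ρ (i + 1) = σ (List.ofFn fun j : Fin i => (ρ (j : ℕ), w (j : ℕ))) (ρ i) (w i)

/-- A run is consistent with the Adam-resolver `τ`: every even-priority step follows `τ`. -/
def ConsAdam (A : Layered Q α d) (τ : List (Q × α) → Q → α → Q) (w : ℕ → α) (ρ : ℕ → Q) : Prop :=
  ∀ i : ℕ, Even (A.semPrio (ρ i) (w i)) →
    ρ (i + 1) = τ (List.ofFn fun j : Fin i => (ρ (j : ℕ), w (j : ℕ))) (ρ i) (w i)

/-- Acceptance of `w` by `⟦A⟧` from the (leaf) state `p`: Eve has a winning strategy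
in the game `G(⟦A⟧,w)`, i.e. a resolver all of whose consistent runs satisfy parity. -/
def SemAccept (A : Layered Q α d) (p : Q) (w : ℕ → α) : Prop :=
  ∃ σ : List (Q × α) → Q → α → Q, A.EveResolver σ ∧
    ∀ ρ : ℕ → Q, A.IsSemRun w p ρ → A.ConsEve σ w ρ → ParityAccept (A.runPrios w ρ)

/-- Uniform semantic determinism: leaf states with the same layer-1 ancestor
recognise the same language in `⟦A⟧`. -/
def UnifSD (A : Layered Q α d) : Prop :=
  ∀ p q : Q, A.IsLeaf p → A.IsLeaf q → A.muHat 1 p = A.muHat 1 q →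
    ∀ w : ℕ → α, (A.SemAccept p w ↔ A.SemAccept q w)

/-! #### Longest suffix resolvers -/

/-- `v` is a suffix-witness to `r`: the layer of `r` has a run labelled `v` ending in `r`. -/
def suffixReaches (A : Layered Q α d) (r : Q) (v : List α) : Prop :=
  ∃ p : Q, A.layer p = A.layer r ∧ A.runList p v = some r

/-- The length of the longest suffix `v` of `u` such that the layer of `r` has a
run labelled `v` ending in `r`. -/
def longestSuffixLen (A : Layered Q α d) (u : List α) (r : Q) : ℕ :=
  Nat.findGreatest (fun k => k ≤ u.length ∧ A.suffixReaches r (u.drop (u.length - k))) u.length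

/-- A longest suffix resolver for Eve, initialised to `u0`: a valid Eve-resolver that,
at a step of odd priority `x` after having read `v`, moves to an `a`-successor `q'`
maximising the length of the longest `(x+1)`-suffix of `u0·v·a` to `μ̂_{x+1} q'`. -/
def IsLongestSuffixResolverE (A : Layered Q α d) (u0 : List α)
    (σ : List (Q × α) → Q → α → Q) : Prop :=
  A.EveResolver σ ∧
  ∀ (h : List (Q × α)) (q : Q) (a : α), Odd (A.semPrio q a) →
    ∀ q' : Q, A.semStep q a q' →
      A.longestSuffixLen (u0 ++ h.map Prod.snd ++ [a]) (A.muHat (A.semPrio q a + 1) q') ≤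
      A.longestSuffixLen (u0 ++ h.map Prod.snd ++ [a]) (A.muHat (A.semPrio q a + 1) (σ h q a))

/-- A longest suffix resolver for Adam, initialised to `u0` (symmetric, for even priorities). -/
def IsLongestSuffixResolverA (A : Layered Q α d) (u0 : List α)
    (τ : List (Q × α) → Q → α → Q) : Prop :=
  A.AdamResolver τ ∧
  ∀ (h : List (Q × α)) (q : Q) (a : α), Even (A.semPrio q a) →
    ∀ q' : Q, A.semStep q a q' →
      A.longestSuffixLen (u0 ++ h.map Prod.snd ++ [a]) (A.muHat (A.semPrio q a + 1) q') ≤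
      A.longestSuffixLen (u0 ++ h.map Prod.snd ++ [a]) (A.muHat (A.semPrio q a + 1) (τ h q a))

/-! #### The random walk on `⟦A⟧` -/

/-- The uniform step probability of the random walk of `⟦A⟧`. -/
def stepProb (A : Layered Q α d) (q : Q) (a : α) (q' : Q) : ENNReal :=
  if A.semStep q a q' then ((Nat.card {p : Q // A.semStep q a p} : ENNReal))⁻¹ else 0

/-- `m` is the Markov measure of the random walk of `⟦A⟧` over the word `w` started at `p`:
a probability measure on `ℕ → Q` whose cylinder probabilities are the products of the
uniform step probabilities. -/
def IsWalkMeasure [MeasurableSpace Q] (A : Layered Q α d) (w : ℕ → α) (p : Q)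
    (m : MeasureTheory.Measure (ℕ → Q)) : Prop :=
  MeasureTheory.IsProbabilityMeasure m ∧
  ∀ (n : ℕ) (s : Fin (n + 1) → Q),
    m {ρ : ℕ → Q | ∀ i : Fin (n + 1), ρ (i : ℕ) = s i} =
      (if s 0 = p then 1 else 0) *
        ∏ i : Fin n, A.stepProb (s i.castSucc) (w (i : ℕ)) (s i.succ)

/-! #### Normal form, centrality, safe minimality, central sequences -/

/-- Normal form: (N1) every layer `x ≥ 2` is a union of non-trivial SCCs, and
(N2) the safe language of every child is strictly smaller than that of its parent. -/
def NormalForm (A : Layered Q α d) : Prop :=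
  ∀ q : Q, 2 ≤ A.layer q →
    (∀ (u : List α) (q' : Q), A.runList q u = some q' →
      ∃ v : List α, v ≠ [] ∧ A.runList q' v = some q) ∧
    (∀ p : Q, 1 < A.layer p → A.μ p = q →
      ∃ u : List α, (A.runList q u).isSome = true ∧ A.runList p u = none)

/-- Inclusion of `x`-safe languages. -/
def SafeLE (A : Layered Q α d) (x : ℕ) (p q : Q) : Prop :=
  (∀ u : List α, A.SafeFin x p u → A.SafeFin x q u) ∧
  (∀ w : ℕ → α, A.SafeInf x p w → A.SafeInf x q w)

/-- Centralised: siblings (same parent) whose safe languages are included,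
lie in the same SCC of their layer. -/
def Centralised (A : Layered Q α d) : Prop :=
  ∀ p q : Q, 2 ≤ A.layer p → A.layer q = A.layer p →
    A.muHat (A.layer p - 1) p = A.muHat (A.layer p - 1) q →
    A.SafeLE (A.layer p) p q →
    (∃ u : List α, A.runList p u = some q) ∧ (∃ v : List α, A.runList q v = some p)

/-- `L(p) = L(q)`: all leaves above (the layer-1 ancestor of) `p` and all leaves above `q`
recognise the same language in `⟦A⟧`. -/
def LangEq1 (A : Layered Q α d) (p q : Q) : Prop :=
  ∀ l l' : Q, A.IsLeaf l → A.IsLeaf l' → A.muHat 1 l = A.muHat 1 p →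
    A.muHat 1 l' = A.muHat 1 q → ∀ w : ℕ → α, (A.SemAccept l w ↔ A.SemAccept l' w)

/-- The equivalence `p ≈_x q`: language equivalence together with equality of all
`y`-safe languages for `2 ≤ y ≤ x`. -/
def ApproxEq (A : Layered Q α d) (x : ℕ) (p q : Q) : Prop :=
  A.LangEq1 p q ∧ ∀ y : ℕ, 2 ≤ y → y ≤ x →
    ((∀ u : List α, A.SafeFin y p u ↔ A.SafeFin y q u) ∧
     (∀ w : ℕ → α, A.SafeInf y p w ↔ A.SafeInf y q w))

/-- Safe minimality: `≈_x`-equivalent states of the same layer are equal. -/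
def SafeMinimal (A : Layered Q α d) : Prop :=
  ∀ p q : Q, A.layer p = A.layer q → A.ApproxEq (A.layer p) p q → p = q

/-- `z` is a central sequence for the state `p` (of layer `x = layer p`). -/
def IsCentralSeq (A : Layered Q α d) (p : Q) (z : List α) : Prop :=
  z ≠ [] ∧ A.runList p z = some p ∧
  (∀ q : Q, A.layer q = A.layer p →
    A.muHat (A.layer p - 1) q = A.muHat (A.layer p - 1) p →
    (A.runList q z = some p ∨ A.runList q z = none)) ∧
  (∀ q' : Q, A.layer q' = A.layer p + 1 →
    A.muHat (A.layer p - 1) q' = A.muHat (A.layer p - 1) p →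
    A.runList q' z = none)

end Layered

/-! ### Morphisms of layered automata -/

/-- A morphism of layered automata. -/
structure IsLayMorphism {Q R α : Type} {d d' : ℕ} (A : Layered Q α d) (B : Layered R α d')
    (φ : Q → R) : Prop where
  map_init : φ A.init = B.init
  map_step : ∀ q a q', A.δ q a = some q' → B.δ (φ q) a = some (φ q')
  map_anc : ∀ p q, A.IsAncestor p q → B.IsAncestor (φ p) (φ q)

/-- A strong morphism of layered automata additionally preserves non-transitions. -/
def IsStrongLayMorphism {Q R α : Type} {d d' : ℕ} (A : Layered Q α d) (B : Layered R α d')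
    (φ : Q → R) : Prop :=
  IsLayMorphism A B φ ∧ ∀ q a, A.δ q a = none → B.δ (φ q) a = none

/-- An isomorphism of layered automata: a bijection on states that restricts to
isomorphisms of the layer transition systems, preserves the initial state, and
commutes with the morphisms `μ`. -/
structure IsLayIso {Q R α : Type} {d d' : ℕ} (A : Layered Q α d) (B : Layered R α d')
    (φ : Q ≃ R) : Prop where
  map_layer : ∀ q, B.layer (φ q) = A.layer q
  map_init : φ A.init = B.init
  map_mu : ∀ q, φ (A.μ q) = B.μ (φ q)
  map_step : ∀ q a, (A.δ q a).map φ = B.δ (φ q) a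

/-- `L(⟦A⟧) = L(⟦B⟧)`: the semantics automata (with any choice of initial leaf states
above the respective initial states) accept the same infinite words. -/
def SemLangEq {Q R α : Type} {d d' : ℕ} (A : Layered Q α d) (B : Layered R α d') : Prop :=
  ∀ (p : Q) (q : R), A.IsLeaf p → A.muHat 1 p = A.init → B.IsLeaf q → B.muHat 1 q = B.init →
    ∀ w : ℕ → α, (A.SemAccept p w ↔ B.SemAccept q w)

/-! ### Deterministic parity automata -/

/-- A deterministic parity automaton over `α` with priorities in `[1,d]`. -/
structure DPA (Q α : Type) (d : ℕ) where
  init : Q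
  next : Q → α → Q
  prio : Q → α → ℕ
  prio_pos : ∀ q a, 1 ≤ prio q a
  prio_le : ∀ q a, prio q a ≤ d

namespace DPA

variable {Q α : Type} {d : ℕ}

/-- The unique run of a DPA on an infinite word. -/
def run (B : DPA Q α d) (w : ℕ → α) : ℕ → Q
  | 0 => B.init
  | n + 1 => B.next (run B w n) (w n)

/-- Acceptance by a DPA: the priorities along the unique run satisfy parity. -/
def Accepts (B : DPA Q α d) (w : ℕ → α) : Prop :=
  ParityAccept (fun i => B.prio (B.run w i) (w i))

end DPA

/-- `L` is ω-regular: recognised by some deterministic parity automaton. -/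
def IsOmegaRegular {α : Type} (L : Set (ℕ → α)) : Prop :=
  ∃ (n d : ℕ) (B : DPA (Fin n) α d), ∀ w : ℕ → α, w ∈ L ↔ B.Accepts w

/-! ### Nondeterministic coBüchi automata -/

/-- A (complete) nondeterministic coBüchi automaton: transitions carry priorities in `{1,2}`. -/
structure NCA (Q α : Type) where
  init : Q
  trans : Q → α → ℕ → Q → Prop
  prio_mem : ∀ q a x q', trans q a x q' → x = 1 ∨ x = 2
  complete : ∀ q a, ∃ x q', trans q a x q'

namespace NCA

variable {Q α : Type}

/-- Nondeterministic acceptance from the state `q`. -/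
def AcceptFrom (B : NCA Q α) (q : Q) (w : ℕ → α) : Prop :=
  ∃ (ρ : ℕ → Q) (pri : ℕ → ℕ), ρ 0 = q ∧
    (∀ i : ℕ, B.trans (ρ i) (w i) (pri i) (ρ (i + 1))) ∧ ParityAccept pri

/-- Semantic determinism: every `a`-successor of `p` recognises `a⁻¹ L(p)`. -/
def SemDet (B : NCA Q α) : Prop :=
  ∀ p a x q, B.trans p a x q →
    ∀ w : ℕ → α, (B.AcceptFrom q w ↔ B.AcceptFrom p (prependW [a] w))

/-- Safe determinism: all `a`-transitions from a state carry the same priority, and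
there is at most one `a`-transition of priority `2` from each state. -/
def SafeDet (B : NCA Q α) : Prop :=
  (∀ q a x q' x' q'', B.trans q a x q' → B.trans q a x' q'' → x = x') ∧
  (∀ q a q' q'', B.trans q a 2 q' → B.trans q a 2 q'' → q' = q'')

/-- 1-saturation: priority-1 transitions go to all language-equivalent states. -/
def OneSaturated (B : NCA Q α) : Prop :=
  ∀ q a p p', B.trans q a 1 p →
    (∀ w : ℕ → α, (B.AcceptFrom p' w ↔ B.AcceptFrom p w)) → B.trans q a 1 p'

end NCA

/-! ### Simple-by-priorities alternating parity automata (abstract) -/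

/-- A simple-by-priorities alternating parity automaton: a complete transition system
over `α × [1,d]` in which all `a`-transitions from a state carry the same priority. -/
structure SPA (Q α : Type) (d : ℕ) where
  init : Q
  step : Q → α → Q → Prop
  prio : Q → α → ℕ
  prio_pos : ∀ q a, 1 ≤ prio q a
  prio_le : ∀ q a, prio q a ≤ d
  complete : ∀ q a, ∃ q', step q a q'

/-! ### The congruence on tuples of finite words -/

/-- The data of the congruence at one level (tuples of a fixed length,
represented as reversed lists of components: the head is the last component). -/
structure CongrLevel (α : Type) where
  bot : List (List α) → Prop
  eq : List (List α) → List (List α) → Prop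
  ptd : List (List α) → Prop

/-- Concatenate a finite word to the last component of a tuple
(tuples are represented as reversed lists: the head is the last component). -/
def tcat {α : Type} (t : List (List α)) (v : List α) : List (List α) :=
  match t with
  | h :: rest => (h ++ v) :: rest
  | [] => []

/-- Merge the last two components of a tuple. -/
def tmerge {α : Type} (t : List (List α)) : List (List α) :=
  match t with
  | u' :: h :: rest => (h ++ u') :: rest
  | t' => t'

/-- The congruence data at level `n` (handling tuples of length `n+1`), defined by
recursion on the level, following the inductive definition of `≈ ⊥`, `≈` and `pointed`. -/
def congrData {α : Type} [Inhabited α] (L : Set (ℕ → α)) : ℕ → CongrLevel α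
  | 0 =>
    { bot := fun _ => False
      eq := fun t s =>
        match t, s with
        | [u], [v] => ∀ w : ℕ → α, (prependW u w ∈ L ↔ prependW v w ∈ L)
        | _, _ => False
      ptd := fun _ => True }
  | n + 1 =>
    let C := congrData L n
    let bot : List (List α) → Prop := fun t =>
      match t with
      | u' :: ubar =>
        C.bot (tmerge (u' :: ubar)) ∨
        ∀ w : List α, w ≠ [] → C.eq (tcat (tmerge (u' :: ubar)) w) ubar →
          ((prependW ubar.reverse.flatten (perWord (u' ++ w)) ∈ L) ↔ Even (n + 1))
      | [] => True
    let eq : List (List α) → List (List α) → Prop := fun t s =>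
      C.eq (tmerge t) (tmerge s) ∧ ∀ v : List α, (bot (tcat t v) ↔ bot (tcat s v))
    let ptd : List (List α) → Prop := fun t =>
      match t with
      | u' :: ubar =>
        ¬ bot (u' :: ubar) ∧ C.ptd ubar ∧
        ∀ (vbar : List (List α)) (v' : List α), vbar.length = n + 1 → C.ptd vbar →
          C.eq (tcat vbar v') ubar → ¬ bot ((v' ++ u') :: vbar) →
          eq ((v' ++ u') :: vbar) (u' :: ubar)
      | [] => False
    { bot := bot, eq := eq, ptd := ptd }

/-- `t ≈ ⊥` (for a nonempty tuple `t`, in reversed representation). -/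
def TupBot {α : Type} [Inhabited α] (L : Set (ℕ → α)) (t : List (List α)) : Prop :=
  (congrData L (t.length - 1)).bot t

/-- `t ≈ s` (for nonempty tuples of the same length, in reversed representation). -/
def TupEq {α : Type} [Inhabited α] (L : Set (ℕ → α)) (t s : List (List α)) : Prop :=
  t.length = s.length ∧ (congrData L (t.length - 1)).eq t s

/-- `t` is pointed. -/
def TupPointed {α : Type} [Inhabited α] (L : Set (ℕ → α)) (t : List (List α)) : Prop :=
  (congrData L (t.length - 1)).ptd t

/-- `cls` exhibits `A` as (a copy of) the congruence automaton `A_≈` of `L`: its states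
are the `≈`-classes of pointed tuples (the layer being the tuple length), transitions
are given by concatenation in the last component, the initial state is the class of
`(ε)`, and the morphisms are given by merging the last two components. -/
structure IsCongrAut {α : Type} [Inhabited α] (L : Set (ℕ → α)) {Q : Type} {d : ℕ}
    (A : Layered Q α d) (cls : (t : List (List α)) → TupPointed L t → Q) : Prop where
  surj : ∀ q : Q, ∃ (t : List (List α)) (ht : TupPointed L t), cls t ht = q
  cls_eq : ∀ t ht s hs, cls t ht = cls s hs ↔ TupEq L t s
  layer_eq : ∀ t ht, A.layer (cls t ht) = t.length
  init_eq : ∀ h : TupPointed L [([] : List α)], cls [([] : List α)] h = A.init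
  step_some : ∀ t ht (a : α) (h' : TupPointed L (tcat t [a])),
    A.δ (cls t ht) a = some (cls (tcat t [a]) h')
  step_none : ∀ t ht (a : α), TupBot L (tcat t [a]) → A.δ (cls t ht) a = none
  mu_eq : ∀ (u' : List α) (ubar : List (List α)) (h : TupPointed L (u' :: ubar))
    (h' : TupPointed L (tmerge (u' :: ubar))), ubar ≠ [] →
    A.μ (cls (u' :: ubar) h) = cls (tmerge (u' :: ubar)) h'

end

/-! A deterministic parity automaton `B` for `L` assigns to every finite word `u` its signature:
for each state `q`, the state reached from `q` on `u` and the least priority seen on the way.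
There are finitely many signatures, and they are compatible with concatenation. Whether `u·w`
or `u·z^ω` is accepted depends only on the signatures of `u` and `z`: for `z^ω` the run splits
into one block per copy of `z`, and the least priority occurring infinitely often is the least
block minimum occurring infinitely often. Unfolding the inductive definition, tuples with
componentwise equal signatures are therefore `≈`-equivalent (and agree on `≈ ⊥`), so the
`≈`-classes of `x`-tuples are at most as many as the `x`-tuples of signatures. -/

lemma Set.Finite.image_of_factor {β γ δ : Type*} {s : Set β} {f : β → γ} {k : β → δ}
    (hk : (k '' s).Finite) (hf : ∀ a ∈ s, ∀ b ∈ s, k a = k b → f a = f b) : (f '' s).Finite := by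
  have hcover : f '' s ⊆ ⋃ y ∈ k '' s, f '' (s ∩ k ⁻¹' {y}) := by
    rintro _ ⟨a, ha, rfl⟩
    exact Set.mem_biUnion (Set.mem_image_of_mem k ha) ⟨a, ⟨ha, rfl⟩, rfl⟩
  refine (hk.biUnion fun y _ => Set.Subsingleton.finite ?_).subset hcover
  rintro _ ⟨a, ⟨ha, hka⟩, rfl⟩ _ ⟨b, ⟨hb, hkb⟩, rfl⟩
  exact hf a ha b hb (hka.trans hkb.symm)

lemma List.exists_eq_cons_cons {β : Type*} {l : List β} {n : ℕ} (h : l.length = n + 2) :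
    ∃ a b l', l = a :: b :: l' ∧ l'.length = n := by
  rcases l with _ | ⟨a, _ | ⟨b, l'⟩⟩ <;> simp at h
  exact ⟨a, b, l', rfl, h⟩

section Words

variable {α : Type}

lemma wordPrefix_add (w : ℕ → α) (m n : ℕ) :
    wordPrefix w (m + n) = wordPrefix w m ++ wordPrefix (wordDrop w m) n := by
  simp only [wordPrefix, wordDrop, List.ofFn_add]
  rfl

lemma wordPrefix_succ (w : ℕ → α) (n : ℕ) :
    wordPrefix w (n + 1) = wordPrefix w n ++ [w n] := by
  rw [wordPrefix_add]
  rfl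

lemma wordPrefix_prependW (u : List α) (w : ℕ → α) :
    wordPrefix (prependW u w) u.length = u := by
  apply List.ext_getElem (by simp [wordPrefix])
  intro i _ hi
  simp [wordPrefix, prependW]

lemma wordDrop_prependW (u : List α) (w : ℕ → α) :
    wordDrop (prependW u w) u.length = w := by
  funext i
  simp [wordDrop, prependW]

variable [Inhabited α]

lemma perWord_of_lt {z : List α} {i : ℕ} (hi : i < z.length) : perWord z i = z[i] := by
  simp [perWord, Nat.mod_eq_of_lt hi, hi]

lemma wordPrefix_perWord_length (z : List α) : wordPrefix (perWord z) z.length = z := by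
  apply List.ext_getElem (by simp [wordPrefix])
  intro i _ hi
  simp [wordPrefix, perWord_of_lt hi]

lemma wordDrop_perWord_length (z : List α) : wordDrop (perWord z) z.length = perWord z := by
  funext i
  simp [wordDrop, perWord]

end Words

section MinInfOften

lemma minInfOften_shift (p : ℕ → ℕ) (N : ℕ) : minInfOften (fun i => p (N + i)) = minInfOften p := by
  unfold minInfOften
  congr 1
  ext x
  constructor
  · intro h K
    obtain ⟨n, hn, rfl⟩ := h K
    exact ⟨N + n, by omega, rfl⟩
  · intro h K
    obtain ⟨n, hn, rfl⟩ := h (N + K)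
    exact ⟨n - N, by omega, by simp only [Nat.add_sub_cancel' (show N ≤ n by omega)]⟩

lemma exists_ge_eq_minInfOften {p : ℕ → ℕ} {b : ℕ} (hp : ∀ n, p n ≤ b) :
    ∀ K, ∃ n, K ≤ n ∧ p n = minInfOften p := by
  refine Nat.sInf_mem (s := {x | ∀ K, ∃ n, K ≤ n ∧ p n = x}) ?_
  obtain ⟨y, hy⟩ :=
    Finite.exists_infinite_fiber fun n => (⟨p n, Nat.lt_succ_of_le (hp n)⟩ : Fin (b + 1))
  have hy : ∃ᶠ n in Filter.atTop, p n = y := by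
    refine Nat.frequently_atTop_iff_infinite.2 (Set.infinite_coe_iff.1 ?_)
    convert hy using 3
    ext n
    simp [Fin.ext_iff]
  exact ⟨y, Filter.frequently_atTop.1 hy⟩

lemma eventually_minInfOften_le (p : ℕ → ℕ) : ∃ N, ∀ n, N ≤ n → minInfOften p ≤ p n := by
  have hlow : ∀ y ∈ Set.Iio (minInfOften p), ∀ᶠ n in Filter.atTop, p n ≠ y := by
    intro y hy
    have := Nat.notMem_of_lt_sInf hy
    simp only [Set.mem_ofPred_eq, not_forall, not_exists, not_and] at this
    exact Filter.eventually_atTop.2 this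
  obtain ⟨N, hN⟩ := Filter.eventually_atTop.1 ((Set.finite_Iio _).eventually_all.2 hlow)
  exact ⟨N, fun n hn => not_lt.1 fun h => hN n hn _ h rfl⟩

lemma minInfOften_of_isLeast_blocks {p m : ℕ → ℕ} {b c : ℕ} (hp : ∀ n, p n ≤ b) (hc : 0 < c)
    (hm : ∀ k, IsLeast ((fun j => p (k * c + j)) '' Set.Iio c) (m k)) :
    minInfOften m = minInfOften p := by
  obtain ⟨N, hN⟩ := eventually_minInfOften_le p
  apply le_antisymm
  · refine Nat.sInf_le fun K => ?_
    obtain ⟨n, hn, hpn⟩ := exists_ge_eq_minInfOften hp (c * (K + N))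
    have hKN : K + N ≤ n / c := (Nat.le_div_iff_mul_le hc).2 (by linarith)
    refine ⟨n / c, by omega, le_antisymm ?_ ?_⟩
    · rw [← hpn]
      exact (hm (n / c)).2 ⟨n % c, Nat.mod_lt n hc, congrArg p (Nat.div_add_mod' n c)⟩
    · obtain ⟨j, -, hj⟩ := (hm (n / c)).1
      rw [← hj]
      exact hN _ ((show N ≤ n / c by omega).trans (Nat.le_mul_of_pos_right _ hc) |>.trans
        (Nat.le_add_right _ _))
  · have hmb : ∀ k, m k ≤ b := fun k => ((hm k).2 ⟨0, hc, rfl⟩).trans (hp _)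
    refine Nat.sInf_le fun K => ?_
    obtain ⟨k, hk, hmk⟩ := exists_ge_eq_minInfOften hmb K
    obtain ⟨j, -, hj⟩ := (hm k).1
    exact ⟨k * c + j, hk.trans ((Nat.le_mul_of_pos_right _ hc).trans (Nat.le_add_right _ _)),
      hj.trans hmk⟩

end MinInfOften

namespace DPA

variable {Q α : Type} {d : ℕ} (B : DPA Q α d)

def stateAfter (q : Q) (u : List α) : Q := u.foldl B.next q

def minPrio : Q → List α → ℕ
  | _, [] => d + 1
  | q, a :: u => min (B.prio q a) (minPrio (B.next q a) u)

def sig (u : List α) : Q → Q × ℕ := fun q => (B.stateAfter q u, B.minPrio q u)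

def prioSeq (q : Q) (w : ℕ → α) (i : ℕ) : ℕ := B.prio (B.stateAfter q (wordPrefix w i)) (w i)

lemma stateAfter_append (q : Q) (u v : List α) :
    B.stateAfter q (u ++ v) = B.stateAfter (B.stateAfter q u) v :=
  List.foldl_append

lemma minPrio_le (q : Q) (u : List α) : B.minPrio q u ≤ d + 1 := by
  induction u generalizing q with
  | nil => rfl
  | cons a u ih => exact (min_le_right _ _).trans (ih _)

lemma minPrio_append (q : Q) (u v : List α) :
    B.minPrio q (u ++ v) = min (B.minPrio q u) (B.minPrio (B.stateAfter q u) v) := by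
  induction u generalizing q with
  | nil => exact (min_eq_right (B.minPrio_le q v)).symm
  | cons a u ih => simp only [List.cons_append, minPrio, ih, stateAfter, List.foldl_cons, min_assoc]

lemma sig_append {u₁ u₂ v₁ v₂ : List α} (hu : B.sig u₁ = B.sig u₂) (hv : B.sig v₁ = B.sig v₂) :
    B.sig (u₁ ++ v₁) = B.sig (u₂ ++ v₂) := by
  funext q
  have hu := congrFun hu q
  have hv := congrFun hv (B.stateAfter q u₂)
  simp only [sig, Prod.mk.injEq] at hu hv
  simp only [sig, stateAfter_append, minPrio_append, hu.1, hu.2, hv.1, hv.2]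

lemma sig_flatten {l₁ l₂ : List (List α)} (h : l₁.map B.sig = l₂.map B.sig) :
    B.sig l₁.flatten = B.sig l₂.flatten := by
  induction l₁ generalizing l₂ with
  | nil => rw [List.map_eq_nil_iff.mp h.symm]
  | cons u l₁ ih =>
    obtain ⟨v, l₂, rfl⟩ := List.exists_cons_of_ne_nil (l := l₂) (by rintro rfl; simp at h)
    simp only [List.map_cons, List.cons.injEq] at h
    exact B.sig_append h.1 (ih h.2)

lemma finite_range_sig [Finite Q] : (Set.range B.sig).Finite := by
  refine (Set.Finite.pi fun _ => Set.finite_univ.prod (Set.finite_Iic (d + 1))).subset ?_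
  rintro _ ⟨u, rfl⟩ q -
  exact ⟨trivial, B.minPrio_le q u⟩

lemma finite_image_map_sig [Finite Q] (x : ℕ) :
    (List.map B.sig '' {t : List (List α) | t.length = x}).Finite := by
  have := B.finite_range_sig.to_subtype
  refine ((List.finite_length_eq (Set.range B.sig) x).image (List.map Subtype.val)).subset ?_
  rintro _ ⟨t, rfl, rfl⟩
  exact ⟨t.map fun u => ⟨B.sig u, u, rfl⟩, by simp, by simp⟩

lemma prioSeq_add (q : Q) (w : ℕ → α) (m i : ℕ) :
    B.prioSeq q w (m + i) = B.prioSeq (B.stateAfter q (wordPrefix w m)) (wordDrop w m) i := by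
  simp only [prioSeq, wordPrefix_add, stateAfter_append]
  rfl

lemma minPrio_wordPrefix_succ (q : Q) (w : ℕ → α) (n : ℕ) :
    B.minPrio q (wordPrefix w (n + 1)) = min (B.minPrio q (wordPrefix w n)) (B.prioSeq q w n) := by
  rw [wordPrefix_succ, minPrio_append, minPrio, minPrio, prioSeq,
    min_eq_left ((B.prio_le _ _).trans (Nat.le_succ d))]

lemma isLeast_minPrio_wordPrefix (q : Q) (w : ℕ → α) {n : ℕ} (hn : 0 < n) :
    IsLeast (B.prioSeq q w '' Set.Iio n) (B.minPrio q (wordPrefix w n)) := by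
  induction n with
  | zero => exact absurd hn (lt_irrefl 0)
  | succ n ih =>
    rw [minPrio_wordPrefix_succ]
    rcases Nat.eq_zero_or_pos n with rfl | hn
    · have h := (B.prio_le q (w 0)).trans (Nat.le_succ d)
      simp [minPrio, wordPrefix, prioSeq, stateAfter, min_eq_right h]
    obtain ⟨⟨j, hj, hj_eq⟩, hlb⟩ := ih hn
    refine ⟨?_, ?_⟩
    · rcases min_choice (B.minPrio q (wordPrefix w n)) (B.prioSeq q w n) with h | h <;> rw [h]
      exacts [⟨j, hj.trans n.lt_succ_self, hj_eq⟩, ⟨n, n.lt_succ_self, rfl⟩]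
    · rintro _ ⟨j, hj, rfl⟩
      rcases Nat.lt_succ_iff_lt_or_eq.mp hj with hj | rfl
      exacts [(min_le_left _ _).trans (hlb ⟨j, hj, rfl⟩), min_le_right _ _]

lemma run_eq_stateAfter (w : ℕ → α) (i : ℕ) : B.run w i = B.stateAfter B.init (wordPrefix w i) := by
  induction i with
  | zero => rfl
  | succ i ih => rw [wordPrefix_succ, stateAfter_append, ← ih]; rfl

lemma accepts_iff_prioSeq (w : ℕ → α) : B.Accepts w ↔ ParityAccept (B.prioSeq B.init w) := by
  simp only [Accepts, run_eq_stateAfter]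
  rfl

lemma accepts_prependW_iff (u : List α) (w : ℕ → α) :
    B.Accepts (prependW u w) ↔ ParityAccept (B.prioSeq (B.stateAfter B.init u) w) := by
  rw [accepts_iff_prioSeq, ParityAccept, ParityAccept, ← minInfOften_shift _ u.length]
  simp only [prioSeq_add, wordPrefix_prependW, wordDrop_prependW]

lemma accepts_prependW_congr {u v : List α} (h : B.sig u = B.sig v) (w : ℕ → α) :
    B.Accepts (prependW u w) ↔ B.Accepts (prependW v w) := by
  simp only [sig, funext_iff, Prod.mk.injEq] at h
  rw [accepts_prependW_iff, accepts_prependW_iff, (h B.init).1]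

variable [Inhabited α]

lemma prioSeq_perWord (z : List α) (q : Q) (k j : ℕ) :
    B.prioSeq q (perWord z) (k * z.length + j) =
      B.prioSeq ((B.stateAfter · z)^[k] q) (perWord z) j := by
  induction k generalizing q with
  | zero => simp
  | succ k ih =>
    rw [show (k + 1) * z.length + j = z.length + (k * z.length + j) by ring, prioSeq_add,
      wordPrefix_perWord_length, wordDrop_perWord_length, ih, Function.iterate_succ_apply]

lemma accepts_prependW_perWord_iff (u : List α) {z : List α} (hz : z ≠ []) :
    B.Accepts (prependW u (perWord z)) ↔
      Even (minInfOften fun k => B.minPrio ((B.stateAfter · z)^[k] (B.stateAfter B.init u)) z) := by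
  have hlen : 0 < z.length := List.length_pos_iff.2 hz
  rw [accepts_prependW_iff, ParityAccept,
    ← minInfOften_of_isLeast_blocks (p := B.prioSeq _ (perWord z)) (fun n => B.prio_le _ _) hlen
      fun k => ?_]
  simp only [prioSeq_perWord]
  simpa only [wordPrefix_perWord_length] using B.isLeast_minPrio_wordPrefix _ (perWord z) hlen

lemma accepts_prependW_perWord_congr {u₁ u₂ z₁ z₂ : List α} (hu : B.sig u₁ = B.sig u₂)
    (hz : B.sig z₁ = B.sig z₂) (h₁ : z₁ ≠ []) (h₂ : z₂ ≠ []) :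
    B.Accepts (prependW u₁ (perWord z₁)) ↔ B.Accepts (prependW u₂ (perWord z₂)) := by
  simp only [sig, funext_iff, Prod.mk.injEq] at hu hz
  simp only [accepts_prependW_perWord_iff B _ h₁, accepts_prependW_perWord_iff B _ h₂,
    (hu B.init).1, fun q => (hz q).1, fun q => (hz q).2]

end DPA

section Congruence

variable {α : Type} [Inhabited α] {L : Set (ℕ → α)}

lemma congrData_succ_bot (n : ℕ) (u' : List α) (ubar : List (List α)) :
    (congrData L (n + 1)).bot (u' :: ubar) ↔
      ((congrData L n).bot (tmerge (u' :: ubar)) ∨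
        ∀ w : List α, w ≠ [] → (congrData L n).eq (tcat (tmerge (u' :: ubar)) w) ubar →
          ((prependW ubar.reverse.flatten (perWord (u' ++ w)) ∈ L) ↔ Even (n + 1))) :=
  Iff.rfl

lemma congrData_succ_eq (n : ℕ) (t s : List (List α)) :
    (congrData L (n + 1)).eq t s ↔
      ((congrData L n).eq (tmerge t) (tmerge s) ∧
        ∀ v : List α,
          ((congrData L (n + 1)).bot (tcat t v) ↔ (congrData L (n + 1)).bot (tcat s v))) :=
  Iff.rfl

lemma congrData_eq_symm {n : ℕ} {t s : List (List α)} (h : (congrData L n).eq t s) :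
    (congrData L n).eq s t := by
  induction n generalizing t s with
  | zero =>
    rcases t with _ | ⟨u, _ | ⟨u', t⟩⟩ <;> rcases s with _ | ⟨v, _ | ⟨v', s⟩⟩ <;>
      first | exact h.elim | exact fun w => (h w).symm
  | succ n ih =>
    rw [congrData_succ_eq] at h ⊢
    exact ⟨ih h.1, fun v => (h.2 v).symm⟩

lemma congrData_eq_trans {n : ℕ} {t s r : List (List α)} (h : (congrData L n).eq t s)
    (h' : (congrData L n).eq s r) : (congrData L n).eq t r := by
  induction n generalizing t s r with
  | zero =>
    rcases t with _ | ⟨u, _ | ⟨u', t⟩⟩ <;> rcases s with _ | ⟨v, _ | ⟨v', s⟩⟩ <;>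
      rcases r with _ | ⟨x, _ | ⟨x', r⟩⟩ <;>
      first | exact h.elim | exact h'.elim | exact fun w => (h w).trans (h' w)
  | succ n ih =>
    rw [congrData_succ_eq] at h h' ⊢
    exact ⟨ih h.1 h'.1, fun v => (h.2 v).trans (h'.2 v)⟩

lemma congrData_eq_congr {n : ℕ} {t t' s s' : List (List α)} (ht : (congrData L n).eq t t')
    (hs : (congrData L n).eq s s') : (congrData L n).eq t s ↔ (congrData L n).eq t' s' :=
  ⟨fun h => congrData_eq_trans (congrData_eq_trans (congrData_eq_symm ht) h) hs,
    fun h => congrData_eq_trans (congrData_eq_trans ht h) (congrData_eq_symm hs)⟩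

end Congruence

section SigInvariance

variable {α Q : Type} [Inhabited α] {d : ℕ}

def CongrDataSigInvariant (L : Set (ℕ → α)) (B : DPA Q α d) (n : ℕ) : Prop :=
  ∀ t s : List (List α), t.length = n + 1 → t.map B.sig = s.map B.sig →
    ((congrData L n).bot t ↔ (congrData L n).bot s) ∧ (congrData L n).eq t s

variable {L : Set (ℕ → α)} {B : DPA Q α d}

lemma congrDataSigInvariant_zero (hB : ∀ w, w ∈ L ↔ B.Accepts w) :
    CongrDataSigInvariant L B 0 := by
  intro t s ht h
  obtain ⟨u, rfl⟩ := List.length_eq_one_iff.1 ht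
  obtain ⟨v, rfl⟩ := List.length_eq_one_iff.1 (by simpa using (congrArg List.length h).symm)
  simp only [List.map_cons, List.map_nil, List.cons.injEq, and_true] at h
  exact ⟨Iff.rfl, fun w => by rw [hB, hB]; exact B.accepts_prependW_congr h w⟩

lemma congrData_succ_bot_congr (hB : ∀ w, w ∈ L ↔ B.Accepts w) {n : ℕ}
    (ih : CongrDataSigInvariant L B n) {u' u v' v : List α} {ubar vbar : List (List α)}
    (hlen : ubar.length = n) (h' : B.sig u' = B.sig v') (h : B.sig u = B.sig v)
    (hbar : ubar.map B.sig = vbar.map B.sig) :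
    (congrData L (n + 1)).bot (u' :: u :: ubar) ↔ (congrData L (n + 1)).bot (v' :: v :: vbar) := by
  have hmerge := B.sig_append h h'
  rw [congrData_succ_bot, congrData_succ_bot]
  refine or_congr (ih _ _ (by simp [tmerge, hlen]) (by simp [tmerge, hmerge, hbar])).1
    (forall_congr' fun w => imp_congr_right fun hw => imp_congr ?_ (iff_congr ?_ Iff.rfl))
  · have hcat := B.sig_append h (B.sig_append h' (rfl : B.sig w = B.sig w))
    exact congrData_eq_congr
      (ih _ _ (by simp [tmerge, tcat, hlen]) (by simp [tmerge, tcat, hcat, hbar])).2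
      (ih _ _ (by simp [hlen]) (by simp [h, hbar])).2
  · rw [hB, hB]
    exact B.accepts_prependW_perWord_congr (B.sig_flatten (by simp [h, hbar]))
      (B.sig_append h' rfl) (by simp [hw]) (by simp [hw])

lemma congrDataSigInvariant_succ (hB : ∀ w, w ∈ L ↔ B.Accepts w) {n : ℕ}
    (ih : CongrDataSigInvariant L B n) : CongrDataSigInvariant L B (n + 1) := by
  intro t s ht h
  obtain ⟨u', u, ubar, rfl, hlen⟩ := List.exists_eq_cons_cons ht
  have hs : s.length = n + 2 := by simpa [hlen] using (congrArg List.length h).symm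
  obtain ⟨v', v, vbar, rfl, -⟩ := List.exists_eq_cons_cons hs
  simp only [List.map_cons, List.cons.injEq] at h
  obtain ⟨h', hu, hbar⟩ := h
  refine ⟨congrData_succ_bot_congr hB ih hlen h' hu hbar,
    (congrData_succ_eq n _ _).2 ⟨?_, fun w => ?_⟩⟩
  · exact (ih _ _ (by simp [tmerge, hlen]) (by simp [tmerge, B.sig_append hu h', hbar])).2
  · exact congrData_succ_bot_congr hB ih hlen (B.sig_append h' rfl) hu hbar

lemma congrDataSigInvariant (hB : ∀ w, w ∈ L ↔ B.Accepts w) :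
    ∀ n, CongrDataSigInvariant L B n
  | 0 => congrDataSigInvariant_zero hB
  | n + 1 => congrDataSigInvariant_succ hB (congrDataSigInvariant hB n)

lemma tupEq_iff_of_map_sig_eq (hB : ∀ w, w ∈ L ↔ B.Accepts w) {t s : List (List α)}
    (h : t.map B.sig = s.map B.sig) (r : List (List α)) : TupEq L t r ↔ TupEq L s r := by
  have hlen : t.length = s.length := by simpa using congrArg List.length h
  cases ht : t.length with
  | zero =>
    rw [List.length_eq_zero_iff.1 ht] at h ⊢
    rw [List.map_eq_nil_iff.1 h.symm]
  | succ n =>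
    have e := (congrDataSigInvariant hB n t s ht h).2
    simp only [TupEq, ← hlen, ht, Nat.add_sub_cancel]
    exact and_congr_right fun _ =>
      ⟨congrData_eq_trans (congrData_eq_symm e), congrData_eq_trans e⟩

end SigInvariance

theorem statement_16_general {α : Type} [Inhabited α]
    (L : Set (ℕ → α)) (hL : IsOmegaRegular L) (x : ℕ) :
    {C : Set (List (List α)) | ∃ t : List (List α), t.length = x ∧
        C = {s : List (List α) | s.length = x ∧ TupEq L t s}}.Finite := by
  obtain ⟨N, d, B, hB⟩ := hL
  have hclasses : {C : Set (List (List α)) | ∃ t : List (List α), t.length = x ∧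
      C = {s : List (List α) | s.length = x ∧ TupEq L t s}} =
      (fun t => {s : List (List α) | s.length = x ∧ TupEq L t s}) '' {t | t.length = x} := by
    ext C
    simp [eq_comm]
  rw [hclasses]
  refine (B.finite_image_map_sig x).image_of_factor fun t _ s _ h => ?_
  ext r
  simp only [Set.mem_ofPred_eq, tupEq_iff_of_map_sig_eq hB h]

/-- For an ω-regular language `L` and every `x ≥ 1`, the congruence `≈`
has finite index on `(Σ*)^x`: there are only finitely many `≈`-classes of `x`-tuples. -/
theorem statement_16 {α : Type} [Fintype α] [Inhabited α]
    (L : Set (ℕ → α)) (hL : IsOmegaRegular L) (x : ℕ) (hx : 1 ≤ x) :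
    {C : Set (List (List α)) | ∃ t : List (List α), t.length = x ∧
        C = {s : List (List α) | s.length = x ∧ TupEq L t s}}.Finite :=
  statement_16_general L hL x
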